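/- For states x, y of a skip-free automaton (X,d), x and y are bisimilar in (X,d) if and only if they are bisimilar in the GKAT automaton embed(X,d) obtained by rerouting all accepting transitions to a fresh, always-accepting state ⊤. -/
import Mathlib


variable {At : Type} {Act : Type} {X : Type} {Y : Type} {Z : Type}

/-- A skip-free automaton structure on `X`. -/
abbrev SFA (At Act X : Type) := X → At → Option (Act × Option X)

/-- Acceptance of a guarded trace (a nonempty list of atom/action pairs) from a state. -/
inductive Accepts (h : SFA At Act X) : X → List (At × Act) → Prop
  | last {x α p} : h x α = some (p, none) → Accepts h x [(α, p)]
  | step {x α p x' w} : h x α = some (p, some x') → Accepts h x' w →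
      Accepts h x ((α, p) :: w)

/-- The language of guarded traces accepted by a state of a skip-free automaton. -/
def Lang (h : SFA At Act X) (x : X) : Set (List (At × Act)) := {w | Accepts h x w}

/-- Bisimulations between skip-free automata. -/
def IsSFBisim (h : SFA At Act X) (k : SFA At Act Y) (R : X → Y → Prop) : Prop :=
  ∀ ⦃x y⦄, R x y → ∀ α : At,
    (h x α = none ↔ k y α = none) ∧
    (∀ p : Act, h x α = some (p, none) ↔ k y α = some (p, none)) ∧
    (∀ (p : Act) (x' : X), h x α = some (p, some x') →
      ∃ y' : Y, k y α = some (p, some y') ∧ R x' y')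

/-- Bisimilarity of states of skip-free automata. -/
def SFBisimilar (h : SFA At Act X) (k : SFA At Act Y) (x : X) (y : Y) : Prop :=
  ∃ R, IsSFBisim h k R ∧ R x y

/-- A GKAT automaton structure on `X`: per atom, the output is ⊥ (`none`),
✓ (`some (Sum.inl ())`), or an action/successor pair (`some (Sum.inr (p, x))`). -/
abbrev GKATAut (At Act X : Type) := X → At → Option (Unit ⊕ Act × X)

/-- Bisimulations between GKAT automata. -/
def IsGBisim (d : GKATAut At Act X) (d' : GKATAut At Act Y) (R : X → Y → Prop) : Prop :=
  ∀ ⦃x y⦄, R x y → ∀ α : At,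
    (d x α = none → d' y α = none) ∧
    (d x α = some (Sum.inl ()) → d' y α = some (Sum.inl ())) ∧
    (∀ (p : Act) (x' : X), d x α = some (Sum.inr (p, x')) →
      ∃ y' : Y, d' y α = some (Sum.inr (p, y')) ∧ R x' y')

/-- Bisimilarity of states of GKAT automata. -/
def GBisimilar (d : GKATAut At Act X) (d' : GKATAut At Act Y) (x : X) (y : Y) : Prop :=
  ∃ R, IsGBisim d d' R ∧ R x y

/-- The embedding of a skip-free automaton into a GKAT automaton: accepting transitions
are rerouted to a fresh always-accepting state ⊤ (represented by `none`). -/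
def embed (d : SFA At Act X) : GKATAut At Act (Option X) :=
  fun x? α =>
    match x? with
    | none => some (Sum.inl ())
    | some x =>
        match d x α with
        | none => none
        | some (p, none) => some (Sum.inr (p, none))
        | some (p, some x') => some (Sum.inr (p, some x'))

/-- two states of a skip-free automaton are bisimilar iff they are
bisimilar in the embedded GKAT automaton. -/
lemma embed_some (d : SFA At Act X) (x : X) (α : At) :
    embed d (some x) α =
      match d x α with
      | none => none
      | some (p, none) => some (Sum.inr (p, none))
      | some (p, some x') => some (Sum.inr (p, some x')) := rfl

lemma embed_none' (d : SFA At Act X) (α : At) :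
    embed d (none : Option X) α = some (Sum.inl ()) := rfl

lemma not_R_some_none {d : SFA At Act X} {R : Option X → Option X → Prop}
    (hR : IsGBisim (embed d) (embed d) R) (z : X) (α : At) :
    ¬ R (some z) none := by
  intro h
  obtain ⟨g1, g2, g3⟩ := hR h α
  cases hz : d z α with
  | none =>
    have := g1 (by rw [embed_some, hz])
    rw [embed_none'] at this; simp at this
  | some v =>
    obtain ⟨p, oz⟩ := v
    cases oz with
    | none =>
      obtain ⟨y', hy, _⟩ := g3 p none (by rw [embed_some, hz])
      rw [embed_none'] at hy; simp at hy
    | some z' =>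
      obtain ⟨y', hy, _⟩ := g3 p (some z') (by rw [embed_some, hz])
      rw [embed_none'] at hy; simp at hy

lemma R_none_forces {d : SFA At Act X} {R : Option X → Option X → Prop}
    (hR : IsGBisim (embed d) (embed d) R) (α : At) (b : Option X) :
    R none b → b = none := by
  intro h
  cases b with
  | none => rfl
  | some z =>
    obtain ⟨g1, g2, g3⟩ := hR h α
    have := g2 (by rw [embed_none'])
    rw [embed_some] at this
    cases hz : d z α with
    | none => rw [hz] at this; simp at this
    | some v =>
      obtain ⟨p, oz⟩ := v
      rw [hz] at this
      cases oz <;> simp at this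

theorem sfbisim_iff_embed_bisim (d : SFA At Act X) (x y : X) :
    SFBisimilar d d x y ↔ GBisimilar (embed d) (embed d) (some x) (some y) := by
  constructor
  · rintro ⟨R, hR, hxy⟩
    refine ⟨fun a b => (a = none ∧ b = none) ∨ ∃ x' y', a = some x' ∧ b = some y' ∧ R x' y',
      ?_, Or.inr ⟨x, y, rfl, rfl, hxy⟩⟩
    rintro a b (⟨rfl, rfl⟩ | ⟨x', y', rfl, rfl, hr⟩) α
    · exact ⟨id, id, fun p z h => by rw [embed_none'] at h; simp at h⟩
    · obtain ⟨h1, h2, h3⟩ := hR hr α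
      refine ⟨?_, ?_, ?_⟩
      · intro h
        rw [embed_some] at h ⊢
        cases hx : d x' α with
        | none => rw [h1.mp hx]
        | some v =>
          obtain ⟨p, oz⟩ := v
          rw [hx] at h
          cases oz <;> simp at h
      · intro h
        rw [embed_some] at h
        cases hx : d x' α with
        | none => rw [hx] at h; simp at h
        | some v =>
          obtain ⟨p, oz⟩ := v
          rw [hx] at h; cases oz <;> simp at h
      · intro p z h
        rw [embed_some] at h
        cases hx : d x' α with
        | none => rw [hx] at h; simp at h
        | some v =>
          obtain ⟨p', oz⟩ := v
          rw [hx] at h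
          cases oz with
          | none =>
            simp at h
            obtain ⟨rfl, rfl⟩ := h
            have hb := (h2 p').mp hx
            exact ⟨none, by rw [embed_some, hb], Or.inl ⟨rfl, rfl⟩⟩
          | some x'' =>
            simp at h
            obtain ⟨rfl, rfl⟩ := h
            obtain ⟨y'', hy, hr'⟩ := h3 p' x'' hx
            exact ⟨some y'', by rw [embed_some, hy], Or.inr ⟨x'', y'', rfl, rfl, hr'⟩⟩
  · rintro ⟨R, hR, hxy⟩
    refine ⟨fun a b => R (some a) (some b), ?_, hxy⟩
    intro a b hr α
    obtain ⟨g1, g2, g3⟩ := hR hr α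
    refine ⟨?_, ?_, ?_⟩
    · constructor
      · intro h
        have hb := g1 (by rw [embed_some, h])
        rw [embed_some] at hb
        cases hy : d b α with
        | none => rfl
        | some v =>
          obtain ⟨p, oz⟩ := v
          rw [hy] at hb
          cases oz <;> simp at hb
      · intro h
        cases hx : d a α with
        | none => rfl
        | some v =>
          obtain ⟨p, oz⟩ := v
          cases oz with
          | none =>
            obtain ⟨y', hy, _⟩ := g3 p none (by rw [embed_some, hx])
            rw [embed_some, h] at hy; simp at hy
          | some z =>
            obtain ⟨y', hy, _⟩ := g3 p (some z) (by rw [embed_some, hx])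
            rw [embed_some, h] at hy; simp at hy
    · intro p
      constructor
      · intro h
        obtain ⟨y', hy, hr'⟩ := g3 p none (by rw [embed_some, h])
        have : y' = none := R_none_forces hR α y' hr'
        subst this
        rw [embed_some] at hy
        cases hb : d b α with
        | none => rw [hb] at hy; simp at hy
        | some v =>
          obtain ⟨q, oz⟩ := v
          rw [hb] at hy
          cases oz with
          | none => simp at hy; obtain ⟨rfl, -⟩ := hy; rfl
          | some z => simp at hy
      · intro h
        cases hx : d a α with
        | none =>
          have hb := g1 (by rw [embed_some, hx])
          rw [embed_some, h] at hb; simp at hb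
        | some v =>
          obtain ⟨q, oz⟩ := v
          cases oz with
          | none =>
            obtain ⟨y', hy, hr'⟩ := g3 q none (by rw [embed_some, hx])
            rw [embed_some, h] at hy
            simp at hy
            obtain ⟨rfl, -⟩ := hy
            rfl
          | some z =>
            obtain ⟨y', hy, hr'⟩ := g3 q (some z) (by rw [embed_some, hx])
            rw [embed_some, h] at hy
            simp at hy
            obtain ⟨rfl, hy2⟩ := hy
            subst hy2
            exact absurd hr' (not_R_some_none hR z α)
    · intro p z h
      obtain ⟨y', hy, hr'⟩ := g3 p (some z) (by rw [embed_some, h])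
      cases y' with
      | none => exact absurd hr' (not_R_some_none hR z α)
      | some y'' =>
        rw [embed_some] at hy
        cases hb : d b α with
        | none => rw [hb] at hy; simp at hy
        | some v =>
          obtain ⟨q, oz⟩ := v
          rw [hb] at hy
          cases oz with
          | none => simp at hy
          | some z' =>
            simp at hy
            obtain ⟨rfl, rfl⟩ := hy
            exact ⟨z', rfl, hr'⟩
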